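/- arXiv:1807.03604 — 9 statements merged into one kernel-verified Lean document; each statement's English description precedes it below -/
import Mathlib

section
/- Let G = (V,E) be a bipartite graph and let β be an optimal solution to the LP relaxation of vertex cover (minimize Σ x_v subject to x_u + x_v ≥ 1 for all edges {u,v} and x_v ≥ 0). Define β' by rounding: β'(x_v) = 0 if β(x_v) < 1/2, β'(x_v) = 1/2 if β(x_v) = 1/2, and β'(x_v) = 1 if β(x_v) > 1/2. Then β' is a feasible and optimal solution of the same LP. -/
/-- Feasibility for the LP relaxation of vertex cover on `G`:
all values are nonnegative and every edge is fractionally covered. -/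
def LPFeasible {V : Type*} (G : SimpleGraph V) (x : V → ℝ) : Prop :=
  (∀ v, 0 ≤ x v) ∧ ∀ u v, G.Adj u v → 1 ≤ x u + x v

/-- Optimality for the LP relaxation of vertex cover on `G`: feasible and of
minimum total value among feasible solutions. -/
def LPOptimal {V : Type*} [Fintype V] (G : SimpleGraph V) (x : V → ℝ) : Prop :=
  LPFeasible G x ∧ ∀ y, LPFeasible G y → ∑ v, x v ≤ ∑ v, y v

/-!
Let `r` be the rounding map and `d = r ∘ β - β`. Since `r t + r (1 - t) = 1`, the direction `d`
sums to zero on every tight edge, and it vanishes where `β = 0`; all other constraints have slack.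
Hence `β - ε d` is still feasible for small `ε > 0`, and optimality of `β` gives `∑ d ≤ 0`, i.e.
the rounded solution is no more expensive than `β`. Feasibility of the rounding follows from
`r` being monotone together with `r t + r (1 - t) = 1`.
-/

open Filter Topology Finset

noncomputable def halfRound (t : ℝ) : ℝ :=
  if t < 1/2 then 0 else if t = 1/2 then 1/2 else 1

lemma halfRound_zero : halfRound 0 = 0 := by
  norm_num [halfRound]

lemma halfRound_nonneg (t : ℝ) : 0 ≤ halfRound t := by
  unfold halfRound
  split_ifs <;> norm_num

lemma halfRound_mono : Monotone halfRound := by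
  intro s t hst
  unfold halfRound
  split_ifs <;> grind

lemma halfRound_add_halfRound_one_sub (t : ℝ) : halfRound t + halfRound (1 - t) = 1 := by
  unfold halfRound
  split_ifs <;> grind

lemma eventually_le_sub_mul {a b c : ℝ} (h : a < b ∨ a ≤ b ∧ c ≤ 0) :
    ∀ᶠ ε in 𝓝[>] (0 : ℝ), a ≤ b - ε * c := by
  rcases h with hlt | ⟨hle, hc⟩
  · have hlim : Tendsto (fun ε : ℝ => b - ε * c) (𝓝[>] 0) (𝓝 b) :=
      tendsto_nhdsWithin_of_tendsto_nhds <| by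
        simpa using ((tendsto_id (x := 𝓝 (0 : ℝ))).mul_const c).const_sub b
    exact hlim.eventually (eventually_ge_nhds hlt)
  · filter_upwards [self_mem_nhdsWithin] with ε (hε : 0 < ε)
    nlinarith

section LP

variable {V : Type*} {G : SimpleGraph V} {x : V → ℝ}

lemma LPFeasible.halfRound_comp (hx : LPFeasible G x) : LPFeasible G (fun v => halfRound (x v)) := by
  refine ⟨fun v => halfRound_nonneg _, fun u v hadj => ?_⟩
  have hv : halfRound (1 - x u) ≤ halfRound (x v) := halfRound_mono (by linarith [hx.2 u v hadj])
  linarith [halfRound_add_halfRound_one_sub (x u)]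

variable [Fintype V]

lemma LPOptimal.sum_nonpos_of_eventually_feasible {d : V → ℝ} (hx : LPOptimal G x)
    (hd : ∀ᶠ ε in 𝓝[>] (0 : ℝ), LPFeasible G (fun v => x v - ε * d v)) : ∑ v, d v ≤ 0 := by
  obtain ⟨ε, hfeas, hε : 0 < ε⟩ := (hd.and self_mem_nhdsWithin).exists
  have hle := hx.2 _ hfeas
  rw [sum_sub_distrib, ← mul_sum] at hle
  nlinarith

lemma LPOptimal.sum_halfRound_le (hx : LPOptimal G x) :
    ∑ v, halfRound (x v) ≤ ∑ v, x v := by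
  set d : V → ℝ := fun v => halfRound (x v) - x v
  suffices hd : ∑ v, d v ≤ 0 by
    rw [sum_sub_distrib] at hd
    linarith
  refine hx.sum_nonpos_of_eventually_feasible
    ((eventually_all.2 fun v => ?_).and (eventually_all.2 fun u => eventually_all.2 fun v => ?_))
  · refine eventually_le_sub_mul ?_
    rcases (hx.1.1 v).lt_or_eq with hpos | hzero
    · exact Or.inl hpos
    · simp [d, ← hzero, halfRound_zero]
  · refine eventually_imp_distrib_left.2 fun hadj => ?_
    have hedge : ∀ᶠ ε in 𝓝[>] (0 : ℝ), 1 ≤ x u + x v - ε * (d u + d v) := by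
      refine eventually_le_sub_mul ?_
      rcases (hx.1.2 u v hadj).lt_or_eq with hslack | htight
      · exact Or.inl hslack
      · have hv : x v = 1 - x u := by linarith
        refine Or.inr ⟨htight.le, ?_⟩
        simp only [d, hv]
        linarith [halfRound_add_halfRound_one_sub (x u)]
    filter_upwards [hedge] with ε hε
    linarith

end LP

theorem stmt3_general {V : Type*} [Fintype V] (G : SimpleGraph V)
    (β : V → ℝ) (hβ : LPOptimal G β) :
    LPFeasible G (fun v => if β v < 1/2 then 0 else if β v = 1/2 then 1/2 else 1) ∧
      LPOptimal G (fun v => if β v < 1/2 then 0 else if β v = 1/2 then 1/2 else 1) := by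
  have hfeas : LPFeasible G (fun v => halfRound (β v)) := hβ.1.halfRound_comp
  exact ⟨hfeas, hfeas, fun y hy => hβ.sum_halfRound_le.trans (hβ.2 y hy)⟩

/-- On a bipartite graph, rounding an optimal LP vertex cover solution to values
`0`, `1/2`, `1` yields a feasible and optimal solution. -/
theorem stmt3 {V : Type*} [Fintype V] (G : SimpleGraph V) (hbip : G.Colorable 2)
    (β : V → ℝ) (hβ : LPOptimal G β) :
    LPFeasible G (fun v => if β v < 1/2 then 0 else if β v = 1/2 then 1/2 else 1) ∧
      LPOptimal G (fun v => if β v < 1/2 then 0 else if β v = 1/2 then 1/2 else 1) :=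
  stmt3_general G β hβ
end

section
/- Let β be an optimal solution of the LP relaxation of vertex cover on G = (V,E), and let V₊ = {v : 0 < β(x_v) < 1/2} and V₋ = {v : 1/2 < β(x_v) < 1}. Then |V₊| = |V₋|. -/
open Filter Topology Set

lemma eventually_le_add_mul {a c e : ℝ} (hac : a ≤ c) (htight : c = a → e = 0) :
    ∀ᶠ t in 𝓝 (0 : ℝ), a ≤ c + t * e := by
  rcases hac.lt_or_eq with hlt | rfl
  · have hlim : Tendsto (fun t : ℝ => c + t * e) (𝓝 0) (𝓝 (c + 0 * e)) :=
      tendsto_const_nhds.add (tendsto_id.mul_const e)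
    rw [zero_mul, add_zero] at hlim
    exact (hlim.eventually_const_lt hlt).mono fun _ => le_of_lt
  · simp [htight rfl]

lemma eq_zero_of_eventually_nonneg_mul {c : ℝ} (h : ∀ᶠ t in 𝓝 (0 : ℝ), 0 ≤ t * c) : c = 0 := by
  obtain ⟨s, hs, hsc⟩ := ((h.filter_mono nhdsWithin_le_nhds).and
    (self_mem_nhdsWithin : ∀ᶠ t in 𝓝[>] (0 : ℝ), 0 < t)).exists
  obtain ⟨t, ht, htc⟩ := ((h.filter_mono nhdsWithin_le_nhds).and
    (self_mem_nhdsWithin : ∀ᶠ t in 𝓝[<] (0 : ℝ), t < 0)).exists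
  nlinarith

namespace LPFeasible

variable {V : Type*} [Finite V] {G : SimpleGraph V} {x : V → ℝ}

theorem eventually_add_smul (hx : LPFeasible G x) {d : V → ℝ}
    (hzero : ∀ v, x v = 0 → d v = 0) (hedge : ∀ u v, G.Adj u v → x u + x v = 1 → d u + d v = 0) :
    ∀ᶠ t in 𝓝 (0 : ℝ), LPFeasible G (x + t • d) := by
  have hvertex : ∀ v, ∀ᶠ t in 𝓝 (0 : ℝ), 0 ≤ (x + t • d) v := fun v => by
    simpa using eventually_le_add_mul (hx.1 v) (hzero v)
  have hadj : ∀ u v, ∀ᶠ t in 𝓝 (0 : ℝ), G.Adj u v → 1 ≤ (x + t • d) u + (x + t • d) v :=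
    fun u v => by
      by_cases huv : G.Adj u v
      · filter_upwards [eventually_le_add_mul (hx.2 u v huv) (hedge u v huv)] with t ht _
        simp only [Pi.add_apply, Pi.smul_apply, smul_eq_mul]
        linarith
      · exact .of_forall fun _ h => absurd h huv
  filter_upwards [eventually_all.2 hvertex, eventually_all.2 fun u => eventually_all.2 (hadj u)]
    with t h₀ h₁
  exact ⟨h₀, h₁⟩

end LPFeasible

theorem LPOptimal.sum_eq_zero {V : Type*} [Fintype V] {G : SimpleGraph V} {x d : V → ℝ}
    (hx : LPOptimal G x) (hd : ∀ᶠ t in 𝓝 (0 : ℝ), LPFeasible G (x + t • d)) :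
    ∑ v, d v = 0 := by
  refine eq_zero_of_eventually_nonneg_mul (hd.mono fun t ht => ?_)
  have := hx.2 _ ht
  simp only [Pi.add_apply, Pi.smul_apply, smul_eq_mul, Finset.sum_add_distrib,
    ← Finset.mul_sum] at this
  linarith

noncomputable def halfShift (r : ℝ) : ℝ :=
  (Ioo 0 (1 / 2)).indicator 1 r - (Ioo (1 / 2) 1).indicator 1 r

@[simp]
lemma halfShift_zero : halfShift 0 = 0 := by
  simp [halfShift]

lemma halfShift_one_sub (r : ℝ) : halfShift (1 - r) = -halfShift r := by
  have h₁ : 1 - r ∈ Ioo (0 : ℝ) (1 / 2) ↔ r ∈ Ioo (1 / 2) 1 := by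
    simp only [mem_Ioo]; constructor <;> rintro ⟨_, _⟩ <;> constructor <;> linarith
  have h₂ : 1 - r ∈ Ioo (1 / 2 : ℝ) 1 ↔ r ∈ Ioo 0 (1 / 2) := by
    simp only [mem_Ioo]; constructor <;> rintro ⟨_, _⟩ <;> constructor <;> linarith
  simp only [halfShift, indicator_apply, Pi.one_apply, h₁, h₂]
  ring

lemma sum_indicator_one_comp {V α : Type*} [Fintype V] (f : V → α) (s : Set α) :
    ∑ v, s.indicator (1 : α → ℝ) (f v) = (f ⁻¹' s).ncard := by
  classical
  simp [indicator_apply, Finset.sum_boole, ncard_eq_toFinset_card']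

/-- For an optimal LP vertex cover solution `β`, the set of vertices with value
strictly between `0` and `1/2` has the same size as the set of vertices with
value strictly between `1/2` and `1`. -/
theorem stmt4 {V : Type*} [Fintype V] (G : SimpleGraph V)
    (β : V → ℝ) (hβ : LPOptimal G β) :
    {v | 0 < β v ∧ β v < 1/2}.ncard = {v | 1/2 < β v ∧ β v < 1}.ncard := by
  have hfeas : ∀ᶠ t in 𝓝 (0 : ℝ), LPFeasible G (β + t • (halfShift ∘ β)) :=
    hβ.1.eventually_add_smul (fun v hv => by simp [hv]) fun u v _ h => by
      simp [eq_sub_of_add_eq h, halfShift_one_sub]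
  have hsum := hβ.sum_eq_zero hfeas
  simp only [Function.comp_apply, halfShift, Finset.sum_sub_distrib, sum_indicator_one_comp,
    sub_eq_zero, Nat.cast_inj] at hsum
  exact hsum
end

section
/- Let G = (V,E) be a graph, let β be an optimal solution of the vertex cover LP relaxation on G, and let G' be the induced subgraph of G on the vertices v with β(x_v) = 1/2 (assume β is half-integral, taking values in {0, 1/2, 1}). Then the restriction of β to V(G') is an optimal solution of the vertex cover LP relaxation on G'. -/
/-!
Restrict `β` to the half-vertices `S`. A feasible `y` on `G[S]` is extended by `β` outside `S`.
An edge leaving `S` has its other endpoint at value `1` (value `0` would leave it uncovered), so the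
extension stays feasible on `G`, and optimality of `β` compares the two solutions on `S` alone.
-/

section

variable {V : Type*} {G : SimpleGraph V} {s : Set V}

open Function

lemma LPFeasible.comp_val {x : V → ℝ} (hx : LPFeasible G x) :
    LPFeasible (G.induce s) (x ∘ Subtype.val) :=
  ⟨fun v => hx.1 v, fun u v huv => hx.2 u v (SimpleGraph.comap_adj.mp huv)⟩

lemma extend_val_apply_of_notMem (y : s → ℝ) (x : V → ℝ) {v : V} (hv : v ∉ s) :
    extend Subtype.val y x v = x v :=
  extend_apply' _ _ _ fun ⟨a, ha⟩ => hv (ha ▸ a.2)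

lemma LPFeasible.extend_val {x : V → ℝ} {y : s → ℝ} (hx : LPFeasible G x)
    (hy : LPFeasible (G.induce s) y)
    (hcut : ∀ u v, G.Adj u v → u ∈ s → v ∉ s → 1 ≤ x v) :
    LPFeasible G (extend Subtype.val y x) := by
  have hval := Subtype.val_injective.extend_apply y x
  have hnonneg : ∀ v, 0 ≤ extend Subtype.val y x v := fun v => by
    by_cases hv : v ∈ s
    · simpa [hval ⟨v, hv⟩] using hy.1 ⟨v, hv⟩
    · simpa [extend_val_apply_of_notMem y x hv] using hx.1 v
  refine ⟨hnonneg, fun u v huv => ?_⟩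
  by_cases hu : u ∈ s <;> by_cases hv : v ∈ s
  · simpa [hval ⟨u, hu⟩, hval ⟨v, hv⟩] using hy.2 ⟨u, hu⟩ ⟨v, hv⟩ huv
  · rw [extend_val_apply_of_notMem y x hv]
    linarith [hnonneg u, hcut u v huv hu hv]
  · rw [extend_val_apply_of_notMem y x hu]
    linarith [hnonneg v, hcut v u huv.symm hv hu]
  · rw [extend_val_apply_of_notMem y x hu, extend_val_apply_of_notMem y x hv]
    exact hx.2 u v huv

lemma sum_extend_val [Fintype V] [DecidablePred (· ∈ s)] (y : s → ℝ) (x : V → ℝ) :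
    ∑ v, extend Subtype.val y x v = ∑ v : s, y v + ∑ v : {v // v ∉ s}, x v := by
  rw [← Fintype.sum_subtype_add_sum_subtype (· ∈ s)]
  congr 1
  · exact Fintype.sum_congr _ _ (Subtype.val_injective.extend_apply y x)
  · exact Fintype.sum_congr _ _ fun v => extend_val_apply_of_notMem y x v.2

lemma LPOptimal.comp_val [Fintype V] [DecidablePred (· ∈ s)] {x : V → ℝ} (hx : LPOptimal G x)
    (hcut : ∀ u v, G.Adj u v → u ∈ s → v ∉ s → 1 ≤ x v) :
    LPOptimal (G.induce s) (x ∘ Subtype.val) := by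
  refine ⟨hx.1.comp_val, fun y hy => ?_⟩
  have hle := hx.2 _ (hx.1.extend_val hy hcut)
  rw [sum_extend_val, ← Fintype.sum_subtype_add_sum_subtype (· ∈ s)] at hle
  simpa using hle

end

/-- If `β` is a half-integral optimal solution of the vertex cover LP relaxation
on `G`, then its restriction to the induced subgraph `G'` on the vertices of
value `1/2` is an optimal solution of the LP relaxation on `G'`. -/
theorem stmt6 {V : Type*} [Fintype V] (G : SimpleGraph V) (β : V → ℝ)
    (hhalf : ∀ v, β v = 0 ∨ β v = 1/2 ∨ β v = 1)
    (hopt : LPOptimal G β) :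
    LPOptimal (G.induce {v | β v = 1/2}) (fun v => β ↑v) := by
  refine hopt.comp_val fun u v huv (hu : β u = 1/2) (hv : β v ≠ 1/2) => ?_
  have hcover := hopt.1.2 u v huv
  rcases hhalf v with h | h | h
  · rw [hu, h] at hcover
    norm_num at hcover
  · exact absurd h hv
  · exact h.ge
end

section
/- Let G = (V,E) be a graph, k ∈ ℕ, and construct G' by adding a new vertex s adjacent to every vertex of V. Then G has a matching of size k if and only if G' contains k cycles through s that pairwise share only the vertex s. -/
/-- A matching of a simple graph, given as a finite set of pairwise disjoint edges. -/
def IsMatching {V : Type*} (G : SimpleGraph V) (M : Finset (Sym2 V)) : Prop :=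
  (∀ e ∈ M, e ∈ G.edgeSet) ∧
    ∀ e ∈ M, ∀ f ∈ M, e ≠ f → ∀ v, v ∈ e → v ∉ f

/-- The graph `G'` obtained from `G` by adding a new vertex `s` (modelled by
`none : Option V`) adjacent to every vertex of `G`. -/
def addApex {V : Type*} (G : SimpleGraph V) : SimpleGraph (Option V) :=
  SimpleGraph.fromRel fun a b =>
    a = none ∨ ∃ u v, a = some u ∧ b = some v ∧ G.Adj u v

/-!
An edge `uv` of `G` gives the triangle `s u v s` of `G'`, and conversely a cycle of `G'`
through `s` leaves `s` to some `u`, whose successor `v` is not `s` (a cycle does not reuse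
the edge `su`), so `uv` is an edge of `G` inside the cycle. Cycles meeting only in `s`
therefore yield vertex-disjoint edges and vice versa.
-/

open SimpleGraph

section

variable {V : Type*} {G : SimpleGraph V}

lemma addApex_adj_some {u v : V} : (addApex G).Adj (some u) (some v) ↔ G.Adj u v := by
  simp only [addApex, fromRel_adj]
  constructor
  · rintro ⟨-, h | h⟩ <;> rcases h with h | ⟨a, b, ha, hb, hab⟩ <;> simp_all
    exact hab.symm
  · exact fun h => ⟨by simpa using h.ne, Or.inl (Or.inr ⟨u, v, rfl, rfl, h⟩)⟩

lemma addApex_adj_none (u : V) : (addApex G).Adj none (some u) := by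
  simp [addApex, fromRel_adj]

lemma exists_isCycle_support_of_mem_edgeSet {e : Sym2 V} (he : e ∈ G.edgeSet) :
    ∃ p : (addApex G).Walk none none,
      p.IsCycle ∧ ∀ x ∈ p.support, x = none ∨ ∃ v ∈ e, x = some v := by
  induction e using Sym2.ind with
  | h u v =>
  have huv : G.Adj u v := he
  refine ⟨.cons (addApex_adj_none u) <| .cons (addApex_adj_some.mpr huv) <|
    .cons (addApex_adj_none v).symm .nil, ?_, ?_⟩
  · rw [Walk.cons_isCycle_iff, Walk.isPath_def]
    simp [huv.ne]
  · simp

lemma SimpleGraph.Walk.IsCycle.exists_edge_subset_support {p : (addApex G).Walk none none}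
    (hp : p.IsCycle) :
    ∃ e ∈ G.edgeSet, ∀ v ∈ e, some v ∈ p.support := by
  obtain ⟨a, h, q, rfl⟩ := Walk.not_nil_iff.mp hp.not_nil
  rw [Walk.cons_isCycle_iff] at hp
  obtain ⟨u, rfl⟩ := Option.ne_none_iff_exists.mp h.ne'
  obtain ⟨b, h', r, rfl⟩ := Walk.exists_eq_cons_of_ne (by simp) q
  have hb : b ≠ none := by
    rintro rfl
    exact hp.2 (by simp [Sym2.eq_swap])
  obtain ⟨v, rfl⟩ := Option.ne_none_iff_exists.mp hb
  refine ⟨s(u, v), addApex_adj_some.mp h', ?_⟩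
  rintro w hw
  rcases Sym2.mem_iff.mp hw with rfl | rfl <;> simp

lemma exists_isMatching_card_of_vertexDisjoint {ι : Type*} [Fintype ι] (e : ι → Sym2 V)
    (he : ∀ i, e i ∈ G.edgeSet) (hdisj : ∀ i j v, v ∈ e i → v ∈ e j → i = j) :
    ∃ M : Finset (Sym2 V), IsMatching G M ∧ M.card = Fintype.card ι := by
  have hinj : Function.Injective e := fun i j hij =>
    hdisj i j _ (e i).out_fst_mem (hij ▸ (e i).out_fst_mem)
  refine ⟨Finset.univ.map ⟨e, hinj⟩, ⟨?_, ?_⟩, by simp⟩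
  · simpa using he
  · simp only [Finset.mem_map, Finset.mem_univ, true_and, Function.Embedding.coeFn_mk]
    rintro _ ⟨i, rfl⟩ _ ⟨j, rfl⟩ hij v hvi hvj
    exact hij (congrArg e (hdisj i j v hvi hvj))

end

theorem stmt7_general {V : Type*} (G : SimpleGraph V) (k : ℕ) :
    (∃ M : Finset (Sym2 V), IsMatching G M ∧ M.card = k) ↔
      ∃ C : Fin k → (addApex G).Walk none none,
        (∀ i, (C i).IsCycle) ∧
          ∀ i j, i ≠ j → ∀ x, x ∈ (C i).support → x ∈ (C j).support → x = none := by
  constructor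
  · rintro ⟨M, ⟨hMG, hMdisj⟩, rfl⟩
    choose C hC hCsupp using fun e : M => exists_isCycle_support_of_mem_edgeSet (hMG e e.2)
    refine ⟨fun i => C (M.equivFin.symm i), fun i => hC _, fun i j hij x hxi hxj => ?_⟩
    rcases hCsupp _ x hxi with hx | ⟨v, hvi, rfl⟩
    · exact hx
    rcases hCsupp _ _ hxj with hx | ⟨w, hwj, hvw⟩
    · exact hx
    cases Option.some_injective _ hvw
    exact absurd hwj <| hMdisj _ (M.equivFin.symm i).2 _ (M.equivFin.symm j).2
      (fun h => hij (M.equivFin.symm.injective (Subtype.ext h))) v hvi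
  · rintro ⟨C, hC, hCdisj⟩
    choose e he heC using fun i => (hC i).exists_edge_subset_support
    simpa using exists_isMatching_card_of_vertexDisjoint e he fun i j v hvi hvj =>
      by_contra fun hij => Option.some_ne_none v (hCdisj i j hij _ (heC i v hvi) (heC j v hvj))

/-- `G` has a matching of size `k` if and only if the graph `G'` obtained by adding
a universal vertex `s` contains `k` cycles through `s` that pairwise share only `s`. -/
theorem stmt7 {V : Type*} [Fintype V] [DecidableEq V] (G : SimpleGraph V) (k : ℕ) :
    (∃ M : Finset (Sym2 V), IsMatching G M ∧ M.card = k) ↔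
      ∃ C : Fin k → (addApex G).Walk none none,
        (∀ i, (C i).IsCycle) ∧
          ∀ i j, i ≠ j → ∀ x, x ∈ (C i).support → x ∈ (C j).support → x = none :=
  stmt7_general G k
end

section
/- Let G = (V,E) be a graph with vertex cover S, and suppose that for every pair of distinct non-adjacent vertices u, v ∈ S, the number of common neighbors of u and v in V \ S is at most k, where k ≤ |S|. Suppose further that every vertex in V \ S that is simplicial in G has been removed, i.e., no vertex of V \ S is simplicial. Then |V| ≤ |S| + |S|²·k ≤ |S| + |S|³. -/
/-!
A vertex outside the vertex cover `S` has all its neighbours in `S`; if it is not simplicial, it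
is therefore a common neighbour of some non-adjacent pair of distinct vertices of `S`. Covering
`V \ S` by the common neighbourhoods of these fewer than `|S|²` pairs, each of size at most `k`,
gives `|V \ S| ≤ |S|² k`.
-/

/-- A vertex `v` of `G` is simplicial if its neighborhood induces a clique. -/
def Simplicial {V : Type*} [Fintype V] (G : SimpleGraph V) [DecidableRel G.Adj]
    (v : V) : Prop :=
  ∀ a ∈ G.neighborFinset v, ∀ b ∈ G.neighborFinset v, a ≠ b → G.Adj a b

open Finset

lemma card_filter_offDiag_le_sq {α : Type*} (s : Finset α) (P : α × α → Prop) [DecidablePred P] :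
    {p ∈ s.offDiag | P p}.card ≤ s.card ^ 2 :=
  calc {p ∈ s.offDiag | P p}.card ≤ s.offDiag.card := card_filter_le _ _
    _ ≤ s.card ^ 2 := by rw [offDiag_card, sq]; exact Nat.sub_le _ _

section

variable {V : Type*} [Fintype V] {G : SimpleGraph V} [DecidableRel G.Adj]

lemma exists_nonadj_neighbors_of_not_simplicial {w : V} (hw : ¬ Simplicial G w) :
    ∃ a b, G.Adj w a ∧ G.Adj w b ∧ a ≠ b ∧ ¬ G.Adj a b := by
  simpa [Simplicial] using hw

lemma compl_subset_biUnion_commonNeighbors [DecidableEq V] {S : Finset V}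
    (hvc : ∀ u v, G.Adj u v → u ∈ S ∨ v ∈ S) (hnosimp : ∀ v, v ∉ S → ¬ Simplicial G v) :
    Sᶜ ⊆ {p ∈ S.offDiag | ¬ G.Adj p.1 p.2}.biUnion
      fun p ↦ (G.neighborFinset p.1 ∩ G.neighborFinset p.2) \ S := by
  intro w hw
  rw [mem_compl] at hw
  obtain ⟨a, b, hwa, hwb, hab, hnadj⟩ := exists_nonadj_neighbors_of_not_simplicial (hnosimp w hw)
  have haS : a ∈ S := (hvc w a hwa).resolve_left hw
  have hbS : b ∈ S := (hvc w b hwb).resolve_left hw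
  refine mem_biUnion.mpr ⟨(a, b), ?_, ?_⟩
  · simp [haS, hbS, hab, hnadj]
  · simp [hwa.symm, hwb.symm, hw]

end

/-- Size bound for the tree-width kernel: if `S` is a vertex cover, every pair of
distinct non-adjacent vertices of `S` has at most `k ≤ |S|` common neighbors
outside `S`, and no vertex outside `S` is simplicial, then
`|V| ≤ |S| + |S|²·k ≤ |S| + |S|³`. -/
theorem stmt10 {V : Type*} [Fintype V] [DecidableEq V] (G : SimpleGraph V)
    [DecidableRel G.Adj] (k : ℕ) (S : Finset V)
    (hvc : ∀ u v, G.Adj u v → u ∈ S ∨ v ∈ S)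
    (hk : k ≤ S.card)
    (hpairs : ∀ u ∈ S, ∀ v ∈ S, u ≠ v → ¬ G.Adj u v →
      ((G.neighborFinset u ∩ G.neighborFinset v) \ S).card ≤ k)
    (hnosimp : ∀ v, v ∉ S → ¬ Simplicial G v) :
    Fintype.card V ≤ S.card + S.card ^ 2 * k ∧
      S.card + S.card ^ 2 * k ≤ S.card + S.card ^ 3 := by
  have hcompl : Sᶜ.card ≤ S.card ^ 2 * k :=
    calc Sᶜ.card
        ≤ ({p ∈ S.offDiag | ¬ G.Adj p.1 p.2}.biUnion
            fun p ↦ (G.neighborFinset p.1 ∩ G.neighborFinset p.2) \ S).card :=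
          card_le_card (compl_subset_biUnion_commonNeighbors hvc hnosimp)
      _ ≤ {p ∈ S.offDiag | ¬ G.Adj p.1 p.2}.card * k := by
          refine card_biUnion_le_card_mul _ _ _ fun p hp ↦ ?_
          obtain ⟨⟨hu, hv, hne⟩, hnadj⟩ := by simpa only [mem_filter, mem_offDiag] using hp
          exact hpairs p.1 hu p.2 hv hne hnadj
      _ ≤ S.card ^ 2 * k := by gcongr; exact card_filter_offDiag_le_sq S _
  refine ⟨by rw [← card_add_card_compl S]; omega, ?_⟩
  calc S.card + S.card ^ 2 * k ≤ S.card + S.card ^ 2 * S.card := by gcongr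
    _ = S.card + S.card ^ 3 := by ring
end

section
/- Let P be a finite set of distinct points in the plane and k ∈ ℕ. Suppose some line ℓ covers at least k+1 points of P. Then P can be covered by at most k lines if and only if P \ ℓ can be covered by at most k−1 lines (where k ≥ 1; if k = 0 then P cannot be covered by 0 lines unless P \ ℓ = ∅ and P = ∅). -/
/-!
Two distinct lines meet in at most one point. Hence if a cover `L` of `P` by lines omits `ℓ`,
sending each point of `P ∩ ℓ` to a line of `L` through it is injective, so `|P ∩ ℓ| ≤ |L|`.
Thus a cover by at most `k` lines must contain `ℓ` once `ℓ` carries more than `k` points of `P`,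
and removing `ℓ` from it leaves a cover of `P \ ℓ`; conversely `ℓ` can always be added to a
cover of `P \ ℓ`.
-/

/-- A line in the plane: a one-dimensional affine subspace of `ℝ²`. -/
def IsLine (L : AffineSubspace ℝ (ℝ × ℝ)) : Prop :=
  Module.finrank ℝ L.direction = 1

/-- `P` can be covered by at most `k` lines. -/
def CoveredBy (P : Set (ℝ × ℝ)) (k : ℕ) : Prop :=
  ∃ L : Finset (AffineSubspace ℝ (ℝ × ℝ)), L.card ≤ k ∧ (∀ l ∈ L, IsLine l) ∧
    ∀ p ∈ P, ∃ l ∈ L, p ∈ l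

open Module

theorem AffineSubspace.eq_affineSpan_pair_of_finrank_direction_eq_one {k V P : Type*}
    [DivisionRing k] [AddCommGroup V] [Module k V] [AddTorsor V P] {s : AffineSubspace k P}
    (hs : finrank k s.direction = 1) {p q : P} (hp : p ∈ s) (hq : q ∈ s) (hpq : p ≠ q) :
    s = line[k, p, q] := by
  have : FiniteDimensional k s.direction := .of_finrank_pos (by omega)
  have hle := affineSpan_pair_le_of_mem_of_mem hp hq
  refine (eq_of_direction_eq_of_nonempty_of_le ?_ ⟨p, left_mem_affineSpan_pair k p q⟩ hle).symm
  refine Submodule.eq_of_le_of_finrank_eq (direction_le hle) ?_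
  rw [hs, direction_affineSpan, vectorSpan_pair, finrank_span_singleton (vsub_ne_zero.2 hpq)]

theorem IsLine.eq_of_mem_of_mem {l₁ l₂ : AffineSubspace ℝ (ℝ × ℝ)} (h₁ : IsLine l₁)
    (h₂ : IsLine l₂) {p q : ℝ × ℝ} (hp₁ : p ∈ l₁) (hp₂ : p ∈ l₂) (hq₁ : q ∈ l₁) (hq₂ : q ∈ l₂)
    (hpq : p ≠ q) : l₁ = l₂ :=
  (AffineSubspace.eq_affineSpan_pair_of_finrank_direction_eq_one h₁ hp₁ hq₁ hpq).trans
    (AffineSubspace.eq_affineSpan_pair_of_finrank_direction_eq_one h₂ hp₂ hq₂ hpq).symm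

theorem IsLine.mem_of_card_lt_ncard {ℓ : AffineSubspace ℝ (ℝ × ℝ)} (hℓ : IsLine ℓ)
    {S : Set (ℝ × ℝ)} (hS : S ⊆ ℓ) {L : Finset (AffineSubspace ℝ (ℝ × ℝ))}
    (hL : ∀ l ∈ L, IsLine l) (hcov : ∀ p ∈ S, ∃ l ∈ L, p ∈ l) (hcard : L.card < S.ncard) :
    ℓ ∈ L := by
  by_contra hℓL
  choose! f hfL hpf using hcov
  have hinj : Set.InjOn f S := by
    intro p hp q hq hfpq
    by_contra hpq
    have hfp : f p = ℓ :=
      (hL _ (hfL p hp)).eq_of_mem_of_mem hℓ (hpf p hp) (hS hp) (hfpq ▸ hpf q hq) (hS hq) hpq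
    exact hℓL (hfp ▸ hfL p hp)
  have := Set.ncard_le_ncard_of_injOn f hfL hinj
  rw [Set.ncard_coe_finset] at this
  omega

theorem CoveredBy.diff_of_lt_ncard_inter {P : Set (ℝ × ℝ)} {k : ℕ}
    {ℓ : AffineSubspace ℝ (ℝ × ℝ)} (hℓ : IsLine ℓ) (h : CoveredBy P k)
    (hmany : k < (P ∩ ℓ).ncard) : CoveredBy (P \ ℓ) (k - 1) := by
  classical
  obtain ⟨L, hcard, hL, hcov⟩ := h
  have hℓL : ℓ ∈ L :=
    hℓ.mem_of_card_lt_ncard Set.inter_subset_right hL (fun p hp => hcov p hp.1) (by omega)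
  refine ⟨L.erase ℓ, by rw [Finset.card_erase_of_mem hℓL]; omega,
    fun l hl => hL l (Finset.mem_of_mem_erase hl), ?_⟩
  rintro p ⟨hpP, hpℓ⟩
  obtain ⟨l, hlL, hpl⟩ := hcov p hpP
  exact ⟨l, Finset.mem_erase.2 ⟨by rintro rfl; exact hpℓ hpl, hlL⟩, hpl⟩

theorem CoveredBy.of_diff {P : Set (ℝ × ℝ)} {k : ℕ} {ℓ : AffineSubspace ℝ (ℝ × ℝ)}
    (hℓ : IsLine ℓ) (h : CoveredBy (P \ ℓ) k) : CoveredBy P (k + 1) := by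
  classical
  obtain ⟨L, hcard, hL, hcov⟩ := h
  refine ⟨insert ℓ L, (Finset.card_insert_le ℓ L).trans (by omega), ?_, ?_⟩
  · simpa only [Finset.forall_mem_insert] using ⟨hℓ, hL⟩
  · intro p hp
    by_cases hpℓ : p ∈ ℓ
    · exact ⟨ℓ, Finset.mem_insert_self ℓ L, hpℓ⟩
    · obtain ⟨l, hlL, hpl⟩ := hcov p ⟨hp, hpℓ⟩
      exact ⟨l, Finset.mem_insert_of_mem hlL, hpl⟩

/-- Safeness of the point-line-cover reduction rule: if a line `ℓ` covers at least
`k + 1` points of `P` (with `k ≥ 1`), then `P` can be covered by at most `k` lines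
if and only if the points of `P` off `ℓ` can be covered by at most `k - 1` lines. -/
theorem stmt12 (P : Finset (ℝ × ℝ)) (k : ℕ) (hk : 1 ≤ k)
    (ℓ : AffineSubspace ℝ (ℝ × ℝ)) (hℓ : IsLine ℓ)
    (hmany : k + 1 ≤ ((↑P : Set (ℝ × ℝ)) ∩ (ℓ : Set (ℝ × ℝ))).ncard) :
    CoveredBy (↑P) k ↔ CoveredBy ((↑P : Set (ℝ × ℝ)) \ (ℓ : Set (ℝ × ℝ))) (k - 1) :=
  ⟨fun h => h.diff_of_lt_ncard_inter hℓ hmany,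
    fun h => Nat.sub_add_cancel hk ▸ h.of_diff hℓ⟩
end

section
/- Let G be a multigraph, k ∈ ℕ, and v a vertex contained in more than k cycles that pairwise intersect only in v. Then every feedback vertex set of G of size at most k contains v. -/
/-!
A feedback vertex set avoiding `v` must meet every petal of the flower in a vertex other than `v`.
Since distinct petals share only `v`, these vertices are distinct, so the set has more than `k`
elements.
-/

/-- A multigraph on vertex type `V` with edge type `E` is given by the map `ends`
sending each edge to its (unordered) pair of endpoints. `HasCycleAvoiding ends F`
says that the multigraph contains a cycle none of whose vertices lies in `F`:
a cyclic sequence of `n + 1 ≥ 1` distinct vertices joined by `n + 1` distinct edges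
(this includes self-loops, `n + 1 = 1`, and pairs of parallel edges, `n + 1 = 2`). -/
def HasCycleAvoiding {V E : Type*} (ends : E → Sym2 V) (F : Set V) : Prop :=
  ∃ n : ℕ, ∃ (vs : Fin (n + 1) → V) (es : Fin (n + 1) → E),
    Function.Injective vs ∧ Function.Injective es ∧ (∀ i, vs i ∉ F) ∧
      ∀ i, ends (es i) = s(vs i, vs (i + 1))

/-- `F` is a feedback vertex set: deleting `F` leaves an acyclic multigraph. -/
def IsFVS {V E : Type*} (ends : E → Sym2 V) (F : Set V) : Prop :=
  ¬ HasCycleAvoiding ends F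

theorem IsFVS.exists_mem_of_cycle {V E : Type*} {ends : E → Sym2 V} {F : Set V}
    (hF : IsFVS ends F) {n : ℕ} {vs : Fin (n + 1) → V} {es : Fin (n + 1) → E}
    (hvs : Function.Injective vs) (hes : Function.Injective es)
    (hends : ∀ i, ends (es i) = s(vs i, vs (i + 1))) :
    ∃ i, vs i ∈ F := by
  by_contra! h
  exact hF ⟨n, vs, es, hvs, hes, h, hends⟩

theorem Finset.card_le_card_of_forall_petal_meets {ι V : Type*} [Fintype ι] (C : ι → Set V)
    (v : V) (hC : Pairwise fun j j' => C j ∩ C j' ⊆ {v}) (F : Finset V) (hv : v ∉ F)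
    (hmeets : ∀ j, ∃ x ∈ C j, x ∈ F) :
    Fintype.card ι ≤ F.card := by
  choose x hxC hxF using hmeets
  have hx_inj : Function.Injective x := by
    intro j j' h
    by_contra hjj
    have hxv : x j = v := hC hjj ⟨hxC j, h ▸ hxC j'⟩
    exact hv (hxv ▸ hxF j)
  simpa using Finset.card_le_card_of_injOn x (s := Finset.univ) (fun j _ => hxF j)
    hx_inj.injOn

theorem stmt15_general {V E : Type*} (ends : E → Sym2 V) (v : V) (k : ℕ)
    (hflower : ∃ (n : Fin (k + 1) → ℕ)
        (vs : ∀ j, Fin (n j + 1) → V) (es : ∀ j, Fin (n j + 1) → E),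
      (∀ j, Function.Injective (vs j)) ∧ (∀ j, Function.Injective (es j)) ∧
        (∀ j i, ends (es j i) = s(vs j i, vs j (i + 1))) ∧
        (∀ j, ∃ i, vs j i = v) ∧
        ∀ j j', j ≠ j' → ∀ i i', vs j i = vs j' i' → vs j i = v) :
    ∀ F : Finset V, F.card ≤ k → IsFVS ends ↑F → v ∈ F := by
  intro F hcard hFVS
  by_contra hv
  obtain ⟨n, vs, es, hvs, hes, hends, -, hdisj⟩ := hflower
  have hpetals : Pairwise fun j j' => Set.range (vs j) ∩ Set.range (vs j') ⊆ {v} := by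
    rintro j j' hjj _ ⟨⟨i, rfl⟩, i', hi'⟩
    exact hdisj j j' hjj i i' hi'.symm
  have hmeets : ∀ j, ∃ x ∈ Set.range (vs j), x ∈ F := fun j =>
    let ⟨i, hi⟩ := hFVS.exists_mem_of_cycle (hvs j) (hes j) (hends j)
    ⟨vs j i, ⟨i, rfl⟩, hi⟩
  have hk := F.card_le_card_of_forall_petal_meets _ v hpetals hv hmeets
  rw [Fintype.card_fin] at hk
  omega

/-- If a vertex `v` of a multigraph lies on more than `k` cycles that pairwise
intersect only in `v` (a flower of order `k + 1`), then every feedback vertex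
set of size at most `k` contains `v`. -/
theorem stmt15 {V E : Type*} [DecidableEq V] (ends : E → Sym2 V) (v : V) (k : ℕ)
    (hflower : ∃ (n : Fin (k + 1) → ℕ)
        (vs : ∀ j, Fin (n j + 1) → V) (es : ∀ j, Fin (n j + 1) → E),
      (∀ j, Function.Injective (vs j)) ∧ (∀ j, Function.Injective (es j)) ∧
        (∀ j i, ends (es j i) = s(vs j i, vs j (i + 1))) ∧
        (∀ j, ∃ i, vs j i = v) ∧
        ∀ j j', j ≠ j' → ∀ i i', vs j i = vs j' i' → vs j i = v) :
    ∀ F : Finset V, F.card ≤ k → IsFVS ends ↑F → v ∈ F :=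
  stmt15_general ends v k hflower
end

section
/- Let G be a multigraph with no self-loops, no parallel edges, and minimum degree at least 3, and suppose G has a feedback vertex set of size at most k ≥ 1. Then the feedback vertex set contains at least one of the 3k vertices of highest degree. -/
open Finset SimpleGraph

/-!
Suppose `F` misses `H`. Inside the forest `G - F` the degrees sum to less than `2 |V \ F|`, which
by `δ ≥ 3` is at most `(2/3) ∑_{v ∉ F} deg v`; every other edge end at a vertex outside `F` is
matched by one in `F`. Hence `∑_{v ∉ F} deg v + 6 ≤ 3 ∑_{v ∈ F} deg v`. On the other hand
`H ⊆ V \ F`, and since `|H| ≥ 3 |F|` and every degree in `F` is at most every degree in `H`,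
`3 ∑_{v ∈ F} deg v ≤ ∑_{v ∈ H} deg v ≤ ∑_{v ∉ F} deg v`.
-/

lemma Finset.card_mul_sum_le_card_mul_sum {ι : Type*} {A B : Finset ι} (f : ι → ℕ)
    (h : ∀ a ∈ A, ∀ b ∈ B, f a ≤ f b) :
    #B * ∑ a ∈ A, f a ≤ #A * ∑ b ∈ B, f b := by
  rw [card_eq_sum_ones B, card_eq_sum_ones A, sum_mul_sum, sum_mul_sum, sum_comm]
  exact sum_le_sum fun a ha => sum_le_sum fun b hb => by simpa using h a ha b hb

namespace SimpleGraph

variable {V : Type*} {G : SimpleGraph V}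

lemma IsAcyclic.card_edgeSet_add_one_le [Finite V] [Nonempty V] (hG : G.IsAcyclic) :
    Nat.card G.edgeSet + 1 ≤ Nat.card V := by
  obtain ⟨T, hGT, -, hT⟩ := connected_top.exists_isTree_le_of_le_of_isAcyclic le_top hG
  rw [← (isTree_iff_connected_and_card.1 hT).2]
  exact Nat.add_le_add_right (Nat.card_mono (Set.toFinite _) (edgeSet_mono hGT)) 1

variable [Fintype V] [DecidableEq V] [DecidableRel G.Adj]

lemma sum_card_neighborFinset_inter (s : Finset V) :
    ∑ v ∈ s, #(G.neighborFinset v ∩ s) = 2 * Nat.card (G.induce (s : Set V)).edgeSet := by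
  rw [Nat.card_eq_fintype_card, ← edgeFinset_card, ← sum_degrees_eq_twice_card_edges,
    ← s.sum_coe_sort]
  refine Fintype.sum_congr _ _ fun v => ?_
  have := congrArg Finset.card (map_neighborFinset_induce (G := G) (s := (s : Set V)) v)
  rw [card_map, card_neighborFinset_eq_degree, toFinset_coe] at this
  convert this.symm

lemma sum_card_neighborFinset_sdiff (s : Finset V) :
    ∑ v ∈ s, #(G.neighborFinset v \ s) = ∑ u ∈ sᶜ, #(G.neighborFinset u ∩ s) := by
  have key := sum_card_bipartiteAbove_eq_sum_card_bipartiteBelow G.Adj (s := s) (t := sᶜ)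
  simp only [bipartiteAbove, bipartiteBelow] at key
  convert key using 3 with v _ u _
  · ext w; simp [and_comm]
  · ext w; simp [adj_comm, and_comm]

lemma sum_degree_add_two_le_of_isAcyclic_induce {s : Finset V} (hs : s.Nonempty)
    (hacyc : (G.induce (s : Set V)).IsAcyclic) :
    ∑ v ∈ s, G.degree v + 2 ≤ 2 * #s + ∑ u ∈ sᶜ, G.degree u := by
  have : Nonempty (s : Set V) := hs.to_subtype
  have hforest := hacyc.card_edgeSet_add_one_le
  rw [Nat.card_coe_set_eq (s : Set V), Set.ncard_coe_finset] at hforest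
  have hout : ∑ u ∈ sᶜ, #(G.neighborFinset u ∩ s) ≤ ∑ u ∈ sᶜ, G.degree u :=
    sum_le_sum fun u _ => card_le_card inter_subset_left
  calc ∑ v ∈ s, G.degree v + 2
      = ∑ v ∈ s, #(G.neighborFinset v ∩ s) + ∑ v ∈ s, #(G.neighborFinset v \ s) + 2 := by
        rw [← sum_add_distrib]
        simp only [card_inter_add_card_sdiff, card_neighborFinset_eq_degree]
    _ ≤ 2 * #s + ∑ u ∈ sᶜ, G.degree u := by
        rw [sum_card_neighborFinset_inter, sum_card_neighborFinset_sdiff]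
        omega

end SimpleGraph

/-- In a simple graph with minimum degree at least `3`, any feedback vertex set of
size at most `k ≥ 1` contains at least one of the `3k` vertices of highest degree
(`H` is a set of `3k` vertices such that every vertex outside `H` has degree at
most that of every vertex of `H`). -/
theorem stmt17 {V : Type*} [Fintype V] [DecidableEq V] (G : SimpleGraph V)
    [DecidableRel G.Adj] (k : ℕ) (hk : 1 ≤ k)
    (hmin : ∀ v, 3 ≤ G.degree v)
    (H : Finset V) (hH : H.card = 3 * k)
    (htop : ∀ u ∈ H, ∀ w, w ∉ H → G.degree w ≤ G.degree u)
    (F : Finset V) (hF : F.card ≤ k)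
    (hfvs : (G.induce ((↑F : Set V)ᶜ)).IsAcyclic) :
    ∃ v ∈ F, v ∈ H := by
  by_contra! hFH
  have hHF : H ⊆ Fᶜ := fun u hu => mem_compl.2 fun huF => hFH u huF hu
  have hHne : H.Nonempty := card_pos.1 (by omega)
  have hforest := sum_degree_add_two_le_of_isAcyclic_induce (hHne.mono hHF)
    (by rwa [coe_compl])
  rw [compl_compl] at hforest
  have hmin_sum : 3 * #Fᶜ ≤ ∑ v ∈ Fᶜ, G.degree v := by
    simpa [mul_comm] using card_nsmul_le_sum Fᶜ (fun v => G.degree v) 3 fun v _ => hmin v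
  have hH_sum : ∑ u ∈ H, G.degree u ≤ ∑ v ∈ Fᶜ, G.degree v := sum_le_sum_of_subset hHF
  have hF_sum : 3 * ∑ v ∈ F, G.degree v ≤ ∑ u ∈ H, G.degree u := by
    have hcmp := card_mul_sum_le_card_mul_sum (fun v => G.degree v)
      fun v hv u hu => htop u hu v (hFH v hv)
    rw [hH] at hcmp
    nlinarith
  omega
end

section
/- Let G = (V,E) be a graph, S a vertex cover of G, and u, v ∈ S non-adjacent vertices with more than k common neighbors in V \ S, where tw(G) ≤ k. Then adding the edge {u,v} to G does not increase the tree width above k, i.e., tw(G + {u,v}) ≤ k. -/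
/-!
If no bag contains both `u` and `v`, the bags containing `u` and those containing `v` span
disjoint subtrees. The tree edge `cd` through which a path leaves the `u`-subtree is a bridge, so
`c` lies on every walk from a `u`-bag to a `v`-bag. For a common neighbour `w` of `u` and `v`, the
bags containing `w` span a subtree meeting both, hence `w ∈ B c`. Together with `u` this puts more
than `k + 1` vertices into `B c`. So some bag already contains `u` and `v`, and the same
decomposition works after adding the edge `uv`.
-/

/-- `(T, B)` is a tree decomposition of `G`. -/
def IsTreeDecomp {V ι : Type*} (G : SimpleGraph V) (T : SimpleGraph ι)
    (B : ι → Finset V) : Prop :=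
  T.IsTree ∧ (∀ v, ∃ n, v ∈ B n) ∧ (∀ u v, G.Adj u v → ∃ n, u ∈ B n ∧ v ∈ B n) ∧
    ∀ v, (T.induce {n | v ∈ B n}).Connected

namespace SimpleGraph

variable {ι : Type*} {T : SimpleGraph ι} {A C : Set ι} {x y c d : ι}

lemma Connected.exists_walk_support_subset_of_induce (hA : (T.induce A).Connected)
    (hx : x ∈ A) (hy : y ∈ A) : ∃ W : T.Walk x y, ∀ z ∈ W.support, z ∈ A := by
  obtain ⟨w⟩ := hA ⟨x, hx⟩ ⟨y, hy⟩
  refine ⟨w.map (Embedding.induce A).toHom, fun z hz => ?_⟩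
  -- restate `hz` with the endpoints of `w.map`, so that `Walk.support_map` applies
  replace hz : z ∈ (w.map (Embedding.induce A).toHom).support := hz
  rw [Walk.support_map, List.mem_map] at hz
  obtain ⟨z', -, rfl⟩ := hz
  exact z'.2

lemma Connected.reachable_deleteEdges_of_induce (hA : (T.induce A).Connected)
    (hx : x ∈ A) (hy : y ∈ A) (hd : d ∉ A) : (T.deleteEdges {s(c, d)}).Reachable x y := by
  obtain ⟨W, hWA⟩ := hA.exists_walk_support_subset_of_induce hx hy
  exact reachable_deleteEdges_iff_exists_walk.mpr
    ⟨W, fun he => hd (hWA d (W.snd_mem_support_of_mem_edges he))⟩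

lemma Walk.IsTrail.exists_adj_reachable_deleteEdges {W : T.Walk x y} (hW : W.IsTrail)
    (hx : x ∈ A) (hy : y ∉ A) :
    ∃ c d, T.Adj c d ∧ c ∈ A ∧ d ∉ A ∧ (T.deleteEdges {s(c, d)}).Reachable d y := by
  induction W with
  | nil => exact absurd hx hy
  | @cons a b y hab W ih =>
    rw [Walk.isTrail_cons] at hW
    by_cases hb : b ∈ A
    · exact ih hW.1 hb hy
    · exact ⟨a, b, hab, hx, hb, reachable_deleteEdges_iff_exists_walk.mpr ⟨W, hW.2⟩⟩

lemma IsTree.exists_separating_vertex_of_disjoint (hT : T.IsTree) (hA : (T.induce A).Connected)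
    (hC : (T.induce C).Connected) (hAC : Disjoint A C) :
    ∃ c ∈ A, ∀ D : Set ι, (T.induce D).Connected → (A ∩ D).Nonempty → (C ∩ D).Nonempty →
      c ∈ D := by
  obtain ⟨⟨p, hp⟩⟩ := hA.nonempty
  obtain ⟨⟨q, hq⟩⟩ := hC.nonempty
  obtain ⟨W, hW⟩ := hT.connected.exists_isPath p q
  obtain ⟨c, d, hcd, hc, hd, hdq⟩ :=
    hW.isTrail.exists_adj_reachable_deleteEdges hp (hAC.notMem_of_mem_right hq)
  refine ⟨c, hc, fun D hD ⟨x, hxA, hxD⟩ ⟨y, hyC, hyD⟩ => ?_⟩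
  have hxc : (T.deleteEdges {s(c, d)}).Reachable x c :=
    hA.reachable_deleteEdges_of_induce hxA hc hd
  have hyd : (T.deleteEdges {s(c, d)}).Reachable y d := by
    have hyq := hC.reachable_deleteEdges_of_induce (c := d) hyC hq (hAC.notMem_of_mem_left hc)
    exact (Sym2.eq_swap ▸ hyq).trans hdq.symm
  have hbridge : T.IsBridge s(c, d) := isAcyclic_iff_forall_adj_isBridge.mp hT.isAcyclic hcd
  obtain ⟨W, hWD⟩ := hD.exists_walk_support_subset_of_induce hxD hyD
  have hcross : s(c, d) ∈ W.edges :=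
    W.mem_edges_of_not_reachable_deleteEdges fun hxy => hbridge (hxc.symm.trans (hxy.trans hyd))
  exact hWD c (W.fst_mem_support_of_mem_edges hcross)

end SimpleGraph

namespace IsTreeDecomp

variable {V ι : Type*} {G : SimpleGraph V} {T : SimpleGraph ι} {B : ι → Finset V} {u v : V}

lemma exists_bag_forall_commonNeighbor (h : IsTreeDecomp G T B)
    (huv : ∀ n, u ∈ B n → v ∉ B n) :
    ∃ c, u ∈ B c ∧ ∀ w, G.Adj u w → G.Adj v w → w ∈ B c := by
  obtain ⟨hT, -, hedge, hconn⟩ := h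
  obtain ⟨c, hc, hsep⟩ :=
    hT.exists_separating_vertex_of_disjoint (hconn u) (hconn v) (Set.disjoint_left.mpr huv)
  refine ⟨c, hc, fun w hwu hwv => hsep _ (hconn w) ?_ ?_⟩
  · exact (hedge u w hwu).imp fun _ => id
  · exact (hedge v w hwv).imp fun _ => id

lemma exists_bag_of_card_lt {k : ℕ} (h : IsTreeDecomp G T B) (hB : ∀ n, (B n).card ≤ k + 1)
    {s : Finset V} (hs : ∀ w ∈ s, G.Adj u w ∧ G.Adj v w) (hk : k < s.card) :
    ∃ n, u ∈ B n ∧ v ∈ B n := by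
  classical
  by_contra! huv
  obtain ⟨c, hc, hcommon⟩ := h.exists_bag_forall_commonNeighbor huv
  have hsub : insert u s ⊆ B c :=
    Finset.insert_subset hc fun w hw => hcommon w (hs w hw).1 (hs w hw).2
  have hus : u ∉ s := fun hu => (hs u hu).1.ne rfl
  have hcard := Finset.card_le_card hsub
  rw [Finset.card_insert_of_notMem hus] at hcard
  have hBc := hB c
  omega

lemma sup_edge (h : IsTreeDecomp G T B) (huv : ∃ n, u ∈ B n ∧ v ∈ B n) :
    IsTreeDecomp (G ⊔ SimpleGraph.fromEdgeSet {s(u, v)}) T B := by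
  obtain ⟨hT, hcover, hedge, hconn⟩ := h
  refine ⟨hT, hcover, fun a b hab => ?_, hconn⟩
  rcases hab with hab | ⟨hab, -⟩
  · exact hedge a b hab
  · rcases Sym2.eq_iff.mp hab with ⟨rfl, rfl⟩ | ⟨rfl, rfl⟩
    · exact huv
    · exact huv.imp fun _ => And.symm

end IsTreeDecomp

theorem stmt19_general {V : Type*} [Fintype V] [DecidableEq V] (G : SimpleGraph V)
    [DecidableRel G.Adj] (k : ℕ) (S : Finset V)
    (u v : V)
    (hcommon : k < ((G.neighborFinset u ∩ G.neighborFinset v) \ S).card)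
    (htw : ∃ (ι : Type) (T : SimpleGraph ι) (B : ι → Finset V),
      IsTreeDecomp G T B ∧ ∀ n, (B n).card ≤ k + 1) :
    ∃ (ι : Type) (T : SimpleGraph ι) (B : ι → Finset V),
      IsTreeDecomp (G ⊔ SimpleGraph.fromEdgeSet {s(u, v)}) T B ∧
        ∀ n, (B n).card ≤ k + 1 := by
  obtain ⟨ι, T, B, hTB, hB⟩ := htw
  have hcommon_adj : ∀ w ∈ (G.neighborFinset u ∩ G.neighborFinset v) \ S,
      G.Adj u w ∧ G.Adj v w := by
    intro w hw
    simp only [Finset.mem_sdiff, Finset.mem_inter, SimpleGraph.mem_neighborFinset] at hw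
    exact hw.1
  exact ⟨ι, T, B, hTB.sup_edge (hTB.exists_bag_of_card_lt hB hcommon_adj hcommon), hB⟩

/-- If `S` is a vertex cover of `G`, `u, v ∈ S` are non-adjacent with more than
`k` common neighbors in `V ∖ S`, and `tw(G) ≤ k` (witnessed by a tree
decomposition with bags of size at most `k + 1`), then adding the edge `{u, v}`
keeps the tree width at most `k`. -/
theorem stmt19 {V : Type*} [Fintype V] [DecidableEq V] (G : SimpleGraph V)
    [DecidableRel G.Adj] (k : ℕ) (S : Finset V)
    (hvc : ∀ a b, G.Adj a b → a ∈ S ∨ b ∈ S)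
    (u v : V) (hu : u ∈ S) (hv : v ∈ S) (huv : u ≠ v) (hnadj : ¬ G.Adj u v)
    (hcommon : k < ((G.neighborFinset u ∩ G.neighborFinset v) \ S).card)
    (htw : ∃ (ι : Type) (T : SimpleGraph ι) (B : ι → Finset V),
      IsTreeDecomp G T B ∧ ∀ n, (B n).card ≤ k + 1) :
    ∃ (ι : Type) (T : SimpleGraph ι) (B : ι → Finset V),
      IsTreeDecomp (G ⊔ SimpleGraph.fromEdgeSet {s(u, v)}) T B ∧
        ∀ n, (B n).card ≤ k + 1 :=
  stmt19_general G k S u v hcommon htw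
end
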